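/- arXiv:1907.06680 — 2 statements merged into one kernel-verified Lean document; each statement's English description precedes it below -/
import Mathlib

section
/- The commutative disemigroup Disgp[X] is free on X in the category of commutative disemigroups: for any commutative disemigroup D and any map φ: X → D, there is a unique disemigroup homomorphism Φ: Disgp[X] → D extending φ. -/
/-!
Every element of `Disgp[X]` is built from letters, as `⌊xy⌋₂ = x ⊢ y` and `⌊xu⌋₁ = x ⊣ ⌊u⌋₁`,
which gives uniqueness. For existence, send `⌊u⌋₁` to the `⊣`-product of `φ` over `u` and `⌊xy⌋₂`
to `φ x ⊢ φ y`. In a commutative disemigroup `a ⊣ b` does not see whether `a` is a `⊢`- or a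
`⊣`-product, and `a ⊢ b = a ⊣ b` as soon as `b` is a product of either kind; so the only products
that `⊢` keeps apart are those of two letters, which is what the labels of `Disgp[X]` record.
-/


namespace CDi

/-- A "diword": a basis element of the free commutative disemigroup `⌊X⁺⌋₁ ∪ ⌊XX⌋₂`:
a nonempty multiset (commutative word) together with a label `1`, or label `2`
when the word has length `2`. -/
def DiWord (X : Type*) :=
  {p : Multiset X × ℕ // p.1 ≠ 0 ∧ (p.2 = 1 ∨ (p.2 = 2 ∧ Multiset.card p.1 = 2))}

namespace DiWord

variable {X : Type*}

def word (a : DiWord X) : Multiset X := a.1.1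

def lbl (a : DiWord X) : ℕ := a.1.2

theorem word_ne (a : DiWord X) : a.word ≠ 0 := a.2.1

theorem add_word_ne (a b : DiWord X) : a.word + b.word ≠ 0 := by
  intro h
  have h1 := congrArg Multiset.card h
  simp only [Multiset.card_add, Multiset.card_zero] at h1
  have := a.word_ne
  rw [← Multiset.card_pos] at this
  omega

/-- The operation `⊣` on `Disgp[X]`: always produces label 1. -/
def pd (a b : DiWord X) : DiWord X :=
  ⟨(a.word + b.word, 1), add_word_ne a b, Or.inl rfl⟩

/-- The operation `⊢` on `Disgp[X]`: produces label 2 exactly when both factors are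
single letters (total length 2), label 1 otherwise. -/
def pv (a b : DiWord X) : DiWord X :=
  ⟨(a.word + b.word, if Multiset.card (a.word + b.word) = 2 then 2 else 1), by
    refine ⟨add_word_ne a b, ?_⟩
    split_ifs with h
    · exact Or.inr ⟨rfl, h⟩
    · exact Or.inl rfl⟩

/-- `⌊u⌋₁` for a nonempty commutative word `u`. -/
def m1 (u : Multiset X) (h : u ≠ 0) : DiWord X := ⟨(u, 1), h, Or.inl rfl⟩

/-- A single letter `x ∈ X`, i.e. `⌊x⌋₁`. -/
def mX (x : X) : DiWord X := m1 {x} (by simp)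

/-- `⌊xx'⌋₂`. -/
def m2 (x y : X) : DiWord X := ⟨({x, y}, 2), by simp, Or.inr ⟨rfl, by simp⟩⟩

end DiWord


section Fold1

variable {α β : Type*} (op : β → β → β) [Std.Commutative op] [Std.Associative op] (f : α → β)

/-- `Option.merge op` turns `Option β` into `β` with an identity `none` adjoined, so this fold
is `some _` exactly on nonempty multisets. -/
def foldMapOption (u : Multiset α) : Option β :=
  (u.map (some ∘ f)).fold (Option.merge op) none

theorem foldMapOption_singleton (a : α) : foldMapOption op f {a} = some (f a) := by
  rw [foldMapOption, Multiset.map_singleton, Multiset.fold_singleton]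
  rfl

theorem foldMapOption_add (u v : Multiset α) :
    foldMapOption op f (u + v) =
      Option.merge op (foldMapOption op f u) (foldMapOption op f v) := by
  rw [foldMapOption, Multiset.map_add]
  exact Multiset.fold_add _ none none _ _

theorem isSome_foldMapOption {u : Multiset α} (hu : u ≠ 0) : (foldMapOption op f u).isSome := by
  obtain ⟨a, ha⟩ := Multiset.exists_mem_of_ne_zero hu
  obtain ⟨s, rfl⟩ := Multiset.exists_cons_of_mem ha
  rw [← Multiset.singleton_add, foldMapOption_add, foldMapOption_singleton]
  cases foldMapOption op f s <;> rfl

def fold1 (u : Multiset α) (hu : u ≠ 0) : β :=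
  (foldMapOption op f u).get (isSome_foldMapOption op f hu)

theorem some_fold1 {u : Multiset α} (hu : u ≠ 0) :
    some (fold1 op f u hu) = foldMapOption op f u :=
  Option.some_get _

theorem fold1_of_eq_singleton {u : Multiset α} {a : α} (hu : u ≠ 0) (h : u = {a}) :
    fold1 op f u hu = f a := by
  subst h
  exact Option.some_injective _ ((some_fold1 op f hu).trans (foldMapOption_singleton op f a))

theorem fold1_of_eq_add {w u v : Multiset α} (hw : w ≠ 0) (hu : u ≠ 0) (hv : v ≠ 0)
    (h : w = u + v) : fold1 op f w hw = op (fold1 op f u hu) (fold1 op f v hv) := by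
  subst h
  apply Option.some_injective
  rw [some_fold1, foldMapOption_add, ← some_fold1 op f hu, ← some_fold1 op f hv]
  rfl

theorem fold1_of_eq_pair {u : Multiset α} {a b : α} (hu : u ≠ 0) (h : u = {a, b}) :
    fold1 op f u hu = op (f a) (f b) := by
  rw [fold1_of_eq_add op f hu (Multiset.singleton_ne_zero a) (Multiset.singleton_ne_zero b)
      (by rw [h, Multiset.singleton_add, Multiset.insert_eq_cons]),
    fold1_of_eq_singleton op f _ rfl, fold1_of_eq_singleton op f _ rfl]

theorem exists_fold1_eq_op {u : Multiset α} (hu : u ≠ 0) (h : 2 ≤ Multiset.card u) :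
    ∃ c d, fold1 op f u hu = op c d := by
  obtain ⟨a, ha⟩ := Multiset.exists_mem_of_ne_zero hu
  obtain ⟨s, rfl⟩ := Multiset.exists_cons_of_mem ha
  have hs : s ≠ 0 := by
    rintro rfl
    simp at h
  exact ⟨_, _, fold1_of_eq_add op f hu (Multiset.singleton_ne_zero a) hs
    (Multiset.singleton_add a s).symm⟩

end Fold1

/-- The dialgebra identities, in the form they take for commutative operations. -/
structure IsDiassociative {D : Type*} (qv qd : D → D → D) : Prop where
  qd_qv_right : ∀ a b c, qd a (qv b c) = qd a (qd b c)
  qv_qd_left : ∀ a b c, qv (qd a b) c = qv (qv a b) c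
  qv_qd_right : ∀ a b c, qv a (qd b c) = qd (qv a b) c

def IsDecomposable {D : Type*} (qv qd : D → D → D) (b : D) : Prop :=
  ∃ c d, b = qv c d ∨ b = qd c d

namespace IsDiassociative

variable {D : Type*} {qv qd : D → D → D}

theorem qd_qv_left [Std.Commutative qd] (hD : IsDiassociative qv qd) (a b c : D) :
    qd (qv a b) c = qd (qd a b) c := by
  rw [Std.Commutative.comm (op := qd), hD.qd_qv_right, Std.Commutative.comm (op := qd)]

theorem qv_qd_eq_qd [Std.Commutative qd] [Std.Associative qd] (hD : IsDiassociative qv qd)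
    (a b c : D) : qv a (qd b c) = qd a (qd b c) := by
  rw [hD.qv_qd_right, hD.qd_qv_left, Std.Associative.assoc (op := qd)]

theorem qv_qv_eq_qd [Std.Commutative qv] [Std.Commutative qd] [Std.Associative qd]
    (hD : IsDiassociative qv qd) (a b c : D) : qv a (qv b c) = qd a (qv b c) := by
  rw [Std.Commutative.comm (op := qv) a, ← hD.qv_qd_left, Std.Commutative.comm (op := qv),
    hD.qv_qd_eq_qd, hD.qd_qv_right]

theorem qv_eq_qd_of_isDecomposable [Std.Commutative qv] [Std.Commutative qd]
    [Std.Associative qd] (hD : IsDiassociative qv qd) {b : D} (hb : IsDecomposable qv qd b)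
    (a : D) : qv a b = qd a b := by
  obtain ⟨c, d, rfl | rfl⟩ := hb
  · exact hD.qv_qv_eq_qd a c d
  · exact hD.qv_qd_eq_qd a c d

end IsDiassociative

namespace DiWord

variable {X : Type*}

theorem ext {a b : DiWord X} (hw : a.word = b.word) (hl : a.lbl = b.lbl) : a = b :=
  Subtype.ext (Prod.ext hw hl)

theorem lbl_eq_one_of_ne_two {a : DiWord X} (h : a.lbl ≠ 2) : a.lbl = 1 :=
  a.2.2.resolve_right fun h2 => h h2.1

theorem card_word_of_lbl_eq_two {a : DiWord X} (h : a.lbl = 2) : Multiset.card a.word = 2 :=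
  (a.2.2.resolve_left fun h1 => by simp [lbl, h1] at h).2

theorem eq_m1_of_lbl_ne_two {a : DiWord X} (h : a.lbl ≠ 2) : a = m1 a.word a.word_ne :=
  ext rfl (lbl_eq_one_of_ne_two h)

theorem exists_eq_m2_of_lbl_eq_two {a : DiWord X} (h : a.lbl = 2) : ∃ x y, a = m2 x y := by
  obtain ⟨x, y, hxy⟩ := Multiset.card_eq_two.mp (card_word_of_lbl_eq_two h)
  exact ⟨x, y, ext hxy h⟩

theorem exists_eq_mX_of_card_word_eq_one {a : DiWord X} (h : Multiset.card a.word = 1) :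
    ∃ x, a = mX x := by
  obtain ⟨x, hx⟩ := Multiset.card_eq_one.mp h
  have hl : a.lbl ≠ 2 := fun h2 => by simp [card_word_of_lbl_eq_two h2] at h
  exact ⟨x, ext hx (lbl_eq_one_of_ne_two hl)⟩

theorem m1_cons (x : X) {s : Multiset X} (h : x ::ₘ s ≠ 0) (hs : s ≠ 0) :
    m1 (x ::ₘ s) h = pd (mX x) (m1 s hs) :=
  ext (Multiset.singleton_add x s).symm rfl

theorem pv_mX_mX (x y : X) : pv (mX x) (mX y) = m2 x y :=
  ext (Multiset.singleton_add x {y}) (by simp [pv, lbl, m2, mX, m1, word])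

theorem pv_eq_pd {a b : DiWord X} (h : Multiset.card (a.word + b.word) ≠ 2) : pv a b = pd a b :=
  ext rfl (if_neg h)

theorem induction_on {P : DiWord X → Prop} (a : DiWord X) (mX : ∀ x, P (mX x))
    (pv : ∀ a b, P a → P b → P (pv a b)) (pd : ∀ a b, P a → P b → P (pd a b)) : P a := by
  by_cases h : a.lbl = 2
  · obtain ⟨x, y, rfl⟩ := exists_eq_m2_of_lbl_eq_two h
    rw [← pv_mX_mX]
    exact pv _ _ (mX x) (mX y)
  · have hm1 : ∀ u (hu : u ≠ 0), P (m1 u hu) := by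
      intro u
      induction u using Multiset.induction_on with
      | empty => exact fun hu => absurd rfl hu
      | cons x s ih =>
        intro hu
        by_cases hs : s = 0
        · subst hs
          exact mX x
        · rw [m1_cons x hu hs]
          exact pd _ _ (mX x) (ih hs)
    rw [eq_m1_of_lbl_ne_two h]
    exact hm1 _ _

theorem hom_ext {D : Type*} {qv qd : D → D → D} {Φ Ψ : DiWord X → D}
    (hΦ : ∀ x, Φ (mX x) = Ψ (mX x))
    (hΦv : ∀ a b, Φ (pv a b) = qv (Φ a) (Φ b)) (hΦd : ∀ a b, Φ (pd a b) = qd (Φ a) (Φ b))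
    (hΨv : ∀ a b, Ψ (pv a b) = qv (Ψ a) (Ψ b)) (hΨd : ∀ a b, Ψ (pd a b) = qd (Ψ a) (Ψ b)) :
    Φ = Ψ := by
  funext a
  induction a using induction_on with
  | mX x => exact hΦ x
  | pv a b ha hb => rw [hΦv, hΨv, ha, hb]
  | pd a b ha hb => rw [hΦd, hΨd, ha, hb]

end DiWord

section Lift

variable {X D : Type*} (qv qd : D → D → D) [Std.Commutative qv] [Std.Associative qv]
  [Std.Commutative qd] [Std.Associative qd] (φ : X → D)

def lift (a : DiWord X) : D :=
  if a.lbl = 2 then fold1 qv φ a.word a.word_ne else fold1 qd φ a.word a.word_ne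

theorem lift_of_lbl_ne_two {a : DiWord X} (h : a.lbl ≠ 2) :
    lift qv qd φ a = fold1 qd φ a.word a.word_ne :=
  if_neg h

theorem lift_m1 (u : Multiset X) (hu : u ≠ 0) : lift qv qd φ (DiWord.m1 u hu) = fold1 qd φ u hu :=
  if_neg (show (1 : ℕ) ≠ 2 by decide)

theorem lift_mX (x : X) : lift qv qd φ (DiWord.mX x) = φ x :=
  (lift_m1 qv qd φ _ _).trans (fold1_of_eq_singleton qd φ _ rfl)

theorem lift_m2 (x y : X) : lift qv qd φ (DiWord.m2 x y) = qv (φ x) (φ y) :=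
  (if_pos rfl).trans (fold1_of_eq_pair qv φ _ rfl)

theorem isDecomposable_lift {a : DiWord X} (h : 2 ≤ Multiset.card a.word) :
    IsDecomposable qv qd (lift qv qd φ a) := by
  unfold lift
  split_ifs
  · obtain ⟨c, d, hcd⟩ := exists_fold1_eq_op qv φ a.word_ne h
    exact ⟨c, d, Or.inl hcd⟩
  · obtain ⟨c, d, hcd⟩ := exists_fold1_eq_op qd φ a.word_ne h
    exact ⟨c, d, Or.inr hcd⟩

variable {qv qd}

/-- Under `⊣` a factor `⌊xy⌋₂` behaves like `⌊xy⌋₁`. -/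
theorem qd_lift_left (hD : IsDiassociative qv qd) (a : DiWord X) (d : D) :
    qd (lift qv qd φ a) d = qd (fold1 qd φ a.word a.word_ne) d := by
  by_cases h : a.lbl = 2
  · obtain ⟨x, y, rfl⟩ := DiWord.exists_eq_m2_of_lbl_eq_two h
    rw [lift_m2, fold1_of_eq_pair qd φ (u := (DiWord.m2 x y).word) _ rfl, hD.qd_qv_left]
  · rw [lift_of_lbl_ne_two qv qd φ h]

theorem lift_pd (hD : IsDiassociative qv qd) (a b : DiWord X) :
    lift qv qd φ (DiWord.pd a b) = qd (lift qv qd φ a) (lift qv qd φ b) := by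
  rw [qd_lift_left φ hD, Std.Commutative.comm (op := qd), qd_lift_left φ hD,
    Std.Commutative.comm (op := qd)]
  exact (lift_m1 qv qd φ _ (DiWord.add_word_ne a b)).trans (fold1_of_eq_add qd φ _ _ _ rfl)

theorem lift_pv (hD : IsDiassociative qv qd) (a b : DiWord X) :
    lift qv qd φ (DiWord.pv a b) = qv (lift qv qd φ a) (lift qv qd φ b) := by
  have ha := Multiset.card_pos.mpr a.word_ne
  have hb := Multiset.card_pos.mpr b.word_ne
  by_cases hab : Multiset.card (a.word + b.word) = 2
  · rw [Multiset.card_add] at hab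
    obtain ⟨x, rfl⟩ := DiWord.exists_eq_mX_of_card_word_eq_one (a := a) (by omega)
    obtain ⟨y, rfl⟩ := DiWord.exists_eq_mX_of_card_word_eq_one (a := b) (by omega)
    rw [DiWord.pv_mX_mX, lift_m2, lift_mX, lift_mX]
  · rw [DiWord.pv_eq_pd hab, lift_pd φ hD]
    rw [Multiset.card_add] at hab
    by_cases hb2 : 2 ≤ Multiset.card b.word
    · exact (hD.qv_eq_qd_of_isDecomposable (isDecomposable_lift qv qd φ hb2) _).symm
    · rw [Std.Commutative.comm (op := qd), Std.Commutative.comm (op := qv)]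
      exact (hD.qv_eq_qd_of_isDecomposable (isDecomposable_lift qv qd φ (by omega)) _).symm

end Lift

/-- `Disgp[X]` is the free commutative disemigroup on `X`: for any commutative
disemigroup `(D, qv, qd)` and any map `φ : X → D`, there is a unique disemigroup
homomorphism `Φ : Disgp[X] → D` extending `φ`. -/
theorem disgp_free {X D : Type*} (qv qd : D → D → D)
    (hv_comm : ∀ a b : D, qv a b = qv b a)
    (hd_comm : ∀ a b : D, qd a b = qd b a)
    (hv_assoc : ∀ a b c : D, qv (qv a b) c = qv a (qv b c))
    (hd_assoc : ∀ a b c : D, qd (qd a b) c = qd a (qd b c))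
    (ax1 : ∀ a b c : D, qd a (qv b c) = qd a (qd b c))
    (ax2 : ∀ a b c : D, qv (qd a b) c = qv (qv a b) c)
    (ax3 : ∀ a b c : D, qv a (qd b c) = qd (qv a b) c)
    (φ : X → D) :
    ∃! Φ : DiWord X → D,
      (∀ x : X, Φ (DiWord.mX x) = φ x) ∧
      (∀ a b : DiWord X, Φ (DiWord.pv a b) = qv (Φ a) (Φ b)) ∧
      (∀ a b : DiWord X, Φ (DiWord.pd a b) = qd (Φ a) (Φ b)) := by
  have : Std.Commutative qv := ⟨hv_comm⟩
  have : Std.Commutative qd := ⟨hd_comm⟩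
  have : Std.Associative qv := ⟨hv_assoc⟩
  have : Std.Associative qd := ⟨hd_assoc⟩
  have hD : IsDiassociative qv qd := ⟨ax1, ax2, ax3⟩
  refine ⟨lift qv qd φ, ⟨lift_mX qv qd φ, lift_pv φ hD, lift_pd φ hD⟩, ?_⟩
  rintro Ψ ⟨hΨX, hΨv, hΨd⟩
  exact DiWord.hom_ext (fun x => (hΨX x).trans (lift_mX qv qd φ x).symm) hΨv hΨd
    (lift_pv φ hD) (lift_pd φ hD)

end CDi
end

section
/- Let S be a monic subset of Di[X] and g a normal s-polynomial for s ∈ S (i.e., g = s, or g = s ⊢ x with |s̃|=1 and x ∈ X, or g = s ⊣ ⌊a⌋₁ with s strong and ⌊a⌋ ∈ ⌊X⁺⌋). Then the leading monomial of g equals: s̄ if g=s; ⌊s̃x⌋₂ if g = s⊢x; and ⌊s̃a⌋₁ if g = s⊣⌊a⌋₁. In particular ḡ ≥ s̄, with equality if and only if g = s. -/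
namespace CDi

/-- A monomial ordering on the free commutative semigroup `⌊X⁺⌋` (nonempty multisets
over `X`): a well-ordering compatible with multiplication. -/
structure MonOrd (X : Type*) where
  lt : Multiset X → Multiset X → Prop
  wf : WellFounded fun a b : {u : Multiset X // u ≠ 0} => lt a.1 b.1
  trans : ∀ u v w : Multiset X, u ≠ 0 → v ≠ 0 → w ≠ 0 → lt u v → lt v w → lt u w
  total : ∀ u v : Multiset X, u ≠ 0 → v ≠ 0 → u ≠ v → lt u v ∨ lt v u
  compat : ∀ u v w : Multiset X, u ≠ 0 → v ≠ 0 → lt u v → lt (u + w) (v + w)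

/-- The monomial-center ordering on `⌊X⁺⌋₁ ∪ ⌊XX⌋₂` induced by a monomial ordering:
compare the words first, then the labels. -/
def MonOrd.dlt {X : Type*} (o : MonOrd X) (a b : DiWord X) : Prop :=
  o.lt a.word b.word ∨ (a.word = b.word ∧ a.lbl < b.lbl)

def MonOrd.dle {X : Type*} (o : MonOrd X) (a b : DiWord X) : Prop :=
  a = b ∨ o.dlt a b

variable {X k : Type*} [Ring k]

/-- The free commutative dialgebra `Di[X]` (polynomial diring over `k`): the free
`k`-module on the diwords. -/
abbrev Di (X k : Type*) [Ring k] := DiWord X →₀ k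

/-- The basis diword `m` viewed as an element of `Di[X]`. -/
noncomputable def mono (m : DiWord X) : Di X k := Finsupp.single m 1

/-- The operation `⊣` on `Di[X]`, extended bilinearly. -/
noncomputable def pL (f g : Di X k) : Di X k :=
  f.sum fun u a => g.sum fun v b => Finsupp.single (DiWord.pd u v) (a * b)

/-- The operation `⊢` on `Di[X]`, extended bilinearly. -/
noncomputable def pR (f g : Di X k) : Di X k :=
  f.sum fun u a => g.sum fun v b => Finsupp.single (DiWord.pv u v) (a * b)

/-- `m` is the leading monomial of `f` (w.r.t. the monomial-center ordering `o`). -/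
def IsLM (o : MonOrd X) (f : Di X k) (m : DiWord X) : Prop :=
  m ∈ f.support ∧ ∀ u ∈ f.support, u ≠ m → o.dlt u m

/-- `f` is strong: the associative word of its leading monomial is strictly greater than
the associative word of every other monomial in its support (equivalently `f̃ > r̃_f`). -/
def IsStrong (o : MonOrd X) (f : Di X k) : Prop :=
  ∃ m, IsLM o f m ∧ ∀ u ∈ f.support, u ≠ m → o.lt u.word m.word

/-- Normal `S`-polynomials: `s`, `s ⊢ x` (when `|s̃| = 1`), or `s ⊣ ⌊a⌋₁` (when `s` is strong). -/
def IsNormal (o : MonOrd X) (S : Set (Di X k)) (g : Di X k) : Prop :=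
  g ∈ S ∨
    (∃ s ∈ S, ∃ x : X, (∃ m, IsLM o s m ∧ Multiset.card m.word = 1) ∧
      g = pR s (mono (DiWord.mX x))) ∨
    (∃ s ∈ S, ∃ a : Multiset X, ∃ ha : a ≠ 0, IsStrong o s ∧
      g = pL s (mono (DiWord.m1 a ha)))

/-- `m ∈ Irr(S)`: `m` is not the leading monomial of any normal `S`-polynomial. -/
def Irr (o : MonOrd X) (S : Set (Di X k)) (m : DiWord X) : Prop :=
  ∀ g : Di X k, IsNormal o S g → ¬ IsLM o g m

/-- Every element of `S` is monic. -/
def MonicSet (o : MonOrd X) (S : Set (Di X k)) : Prop :=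
  ∀ s ∈ S, ∃ m, IsLM o s m ∧ s m = 1

/-- `h` is trivial modulo `S`: `h` is a linear combination of normal `S`-polynomials whose
leading monomials are `≤` the leading monomial of `h`. -/
def TrivialMod (o : MonOrd X) (S : Set (Di X k)) (h : Di X k) : Prop :=
  ∃ (n : ℕ) (α : Fin n → k) (g : Fin n → Di X k),
    (∀ i, IsNormal o S (g i)) ∧ h = ∑ i, α i • g i ∧
    ∀ i, α i ≠ 0 → ∀ mi mh, IsLM o (g i) mi → IsLM o h mh → o.dle mi mh

/-- The compositions of elements of a (monic) set `S`: multiplication, special, equal,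
short intersection, equal multiplication and long intersection compositions. -/
def IsComp (o : MonOrd X) (S : Set (Di X k)) (h : Di X k) : Prop :=
  -- multiplication composition
  (∃ f ∈ S, ¬ IsStrong o f ∧ ∃ x : X,
      h = pR f (mono (DiWord.mX x)) ∨ h = pL f (mono (DiWord.mX x))) ∨
  -- special composition
  (∃ f ∈ S, IsStrong o f ∧ (∃ m, IsLM o f m ∧ 1 < Multiset.card m.word) ∧
      (∃ u ∈ f.support, ∃ x : X, u = DiWord.mX x) ∧
      ∃ x : X, h = pR f (mono (DiWord.mX x)) - pL f (mono (DiWord.mX x))) ∨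
  -- equal composition
  (∃ f ∈ S, ∃ g ∈ S, f ≠ g ∧ (∃ m, IsLM o f m ∧ IsLM o g m) ∧ h = f - g) ∨
  -- short intersection composition
  (∃ f ∈ S, ∃ g ∈ S, (∃ mf, IsLM o f mf ∧ Multiset.card mf.word = 2) ∧
      (∃ mg, IsLM o g mg ∧ Multiset.card mg.word = 1) ∧
      ∃ x : X, ∃ gx : Di X k,
        (gx = pR g (mono (DiWord.mX x)) ∨ (IsStrong o g ∧ gx = pL g (mono (DiWord.mX x)))) ∧
        (∃ m, IsLM o f m ∧ IsLM o gx m) ∧ h = f - gx) ∨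
  -- equal multiplication composition
  (∃ f ∈ S, ∃ g ∈ S, IsStrong o f ∧ IsStrong o g ∧
      ∃ mf mg, IsLM o f mf ∧ IsLM o g mg ∧
        3 < Multiset.card mf.word + Multiset.card mg.word ∧
        mf ≠ mg ∧ mf.word = mg.word ∧
        ∃ x : X, h = pL f (mono (DiWord.mX x)) - pL g (mono (DiWord.mX x))) ∨
  -- long intersection composition
  (∃ f ∈ S, ∃ g ∈ S, IsStrong o f ∧ IsStrong o g ∧
      ∃ mf mg, IsLM o f mf ∧ IsLM o g mg ∧
        3 < Multiset.card mf.word + Multiset.card mg.word ∧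
        mf ≠ mg ∧ mf.word ≠ mg.word ∧
        ∃ w a b : Multiset X,
          mf.word ≤ w ∧ mg.word ≤ w ∧ (∀ w', mf.word ≤ w' → mg.word ≤ w' → w ≤ w') ∧
          mf.word + a = w ∧ mg.word + b = w ∧
          Multiset.card w < Multiset.card mf.word + Multiset.card mg.word ∧
          ∃ hb : b ≠ 0,
            ((a = 0 ∧ h = f - pL g (mono (DiWord.m1 b hb))) ∨
              (∃ ha : a ≠ 0,
                h = pL f (mono (DiWord.m1 a ha)) - pL g (mono (DiWord.m1 b hb)))))

/-- `S` is a Gröbner–Shirshov basis: `S` is monic and every composition is trivial mod `S`. -/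
def IsGSB (o : MonOrd X) (S : Set (Di X k)) : Prop :=
  MonicSet o S ∧ ∀ h, IsComp o S h → TrivialMod o S h

/-- Membership in the (two-sided) ideal `Id(S)` of `Di[X]` generated by `S`. -/
inductive InIdeal (S : Set (Di X k)) : Di X k → Prop
  | mem {f} : f ∈ S → InIdeal S f
  | zero : InIdeal S 0
  | add {f g} : InIdeal S f → InIdeal S g → InIdeal S (f + g)
  | smul (c : k) {f} : InIdeal S f → InIdeal S (c • f)
  | pL_left (f) {g} : InIdeal S g → InIdeal S (pL f g)
  | pL_right (f) {g} : InIdeal S g → InIdeal S (pL g f)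
  | pR_left (f) {g} : InIdeal S g → InIdeal S (pR f g)
  | pR_right (f) {g} : InIdeal S g → InIdeal S (pR g f)

/-- `I` is an ideal of `Di[X]`. -/
def IsIdeal (I : Set (Di X k)) : Prop :=
  (0 : Di X k) ∈ I ∧ (∀ f g, f ∈ I → g ∈ I → f + g ∈ I) ∧
    (∀ (c : k) f, f ∈ I → c • f ∈ I) ∧
    ∀ f g, g ∈ I → pL f g ∈ I ∧ pL g f ∈ I ∧ pR f g ∈ I ∧ pR g f ∈ I

/-- `Id(S)` as a `k`-submodule of `Di[X]`. -/
def idealSub (S : Set (Di X k)) : Submodule k (Di X k) where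
  carrier := {f | InIdeal S f}
  add_mem' := fun hf hg => InIdeal.add hf hg
  zero_mem' := InIdeal.zero
  smul_mem' := fun c _ hf => InIdeal.smul c hf



section Aux

variable {Y K : Type*} [Field K]

theorem DiWord.ext' {u v : DiWord Y} (hw : u.word = v.word) (hl : u.lbl = v.lbl) : u = v :=
  Subtype.ext (Prod.ext hw hl)

theorem DiWord.lbl_eq_one {u : DiWord Y} (h : Multiset.card u.word = 1) : u.lbl = 1 := by
  rcases u.2.2 with h1 | ⟨h1, h2⟩
  · exact h1
  · exfalso
    have h' : Multiset.card u.word = 2 := h2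
    omega

theorem MonOrd.lt_irrefl' (o : MonOrd Y) {u : Multiset Y} (hu : u ≠ 0) : ¬ o.lt u u := by
  refine o.wf.induction (C := fun v => ¬ o.lt v.1 v.1) ⟨u, hu⟩ ?_
  intro v ih h
  exact ih v h h

theorem add_ne_zero' {u : Multiset Y} (w : Multiset Y) (hu : u ≠ 0) : u + w ≠ 0 := by
  intro h
  have := congrArg Multiset.card h
  simp only [Multiset.card_add, Multiset.card_zero] at this
  exact hu (Multiset.card_eq_zero.mp (by omega))

theorem MonOrd.lt_add' (o : MonOrd Y) {u w : Multiset Y} (hu : u ≠ 0) (hw : w ≠ 0) :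
    o.lt u (u + w) := by
  have key : ∀ v : {m : Multiset Y // m ≠ 0}, ¬ o.lt (v.1 + w) v.1 := by
    intro v
    refine o.wf.induction (C := fun v => ¬ o.lt (v.1 + w) v.1) v ?_
    intro v ih hlt
    exact ih ⟨v.1 + w, add_ne_zero' w v.2⟩ hlt
      (o.compat (v.1 + w) v.1 w (add_ne_zero' w v.2) v.2 hlt)
  have hwc : Multiset.card w ≠ 0 := fun hc => hw (Multiset.card_eq_zero.mp hc)
  have hneq : u ≠ u + w := by
    intro h
    have := congrArg Multiset.card h
    simp only [Multiset.card_add] at this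
    omega
  rcases o.total u (u + w) hu (add_ne_zero' w hu) hneq with h | h
  · exact h
  · exact absurd h (key ⟨u, hu⟩)

theorem IsLM.unique {o : MonOrd Y} {s : Di Y K} {m m' : DiWord Y}
    (h : IsLM o s m) (h' : IsLM o s m') : m = m' := by
  by_contra hne
  have h1 := h'.2 m h.1 hne
  have h2 := h.2 m' h'.1 (fun e => hne e.symm)
  rcases h1 with ha | ⟨ha, hb⟩ <;> rcases h2 with hc | ⟨hc, hd⟩
  · exact o.lt_irrefl' m.word_ne (o.trans _ _ _ m.word_ne m'.word_ne m.word_ne ha hc)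
  · rw [hc] at ha; exact o.lt_irrefl' m.word_ne ha
  · rw [ha] at hc; exact o.lt_irrefl' m'.word_ne hc
  · omega

theorem lm_map (o : MonOrd Y) (s : Di Y K) (ms : DiWord Y) (hms : IsLM o s ms)
    (hmonic : s ms = 1) (φ : DiWord Y → DiWord Y)
    (h1 : ∀ u ∈ s.support, u ≠ ms → o.dlt (φ u) (φ ms))
    (h2 : ∀ u ∈ s.support, φ u = φ ms → u = ms) :
    IsLM o (s.sum fun u a => Finsupp.single (φ u) a) (φ ms) := by
  classical
  have hcoef : (s.sum fun u a => Finsupp.single (φ u) a) (φ ms) = 1 := by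
    rw [Finsupp.sum_apply, Finsupp.sum, Finset.sum_eq_single ms]
    · rw [Finsupp.single_apply, if_pos rfl, hmonic]
    · intro u hu hune
      rw [Finsupp.single_apply, if_neg (fun e => hune (h2 u hu e))]
    · intro h; exact absurd hms.1 h
  constructor
  · rw [Finsupp.mem_support_iff, hcoef]; exact one_ne_zero
  · intro v hv hvne
    have hv' := Finsupp.support_sum hv
    rcases Finset.mem_biUnion.mp hv' with ⟨u, hu, hvu⟩
    have hveq : v = φ u := by
      have := Finsupp.support_single_subset hvu
      simpa using this
    subst hveq
    have hune : u ≠ ms := fun e => hvne (by rw [e])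
    exact h1 u hu hune

theorem pR_mono' (s : Di Y K) (b : DiWord Y) :
    pR s (mono b) = s.sum fun u a => Finsupp.single (DiWord.pv u b) a := by
  unfold pR mono
  refine Finsupp.sum_congr fun u hu => ?_
  rw [Finsupp.sum_single_index (by rw [mul_zero, Finsupp.single_zero]), mul_one]

theorem pL_mono' (s : Di Y K) (b : DiWord Y) :
    pL s (mono b) = s.sum fun u a => Finsupp.single (DiWord.pd u b) a := by
  unfold pL mono
  refine Finsupp.sum_congr fun u hu => ?_
  rw [Finsupp.sum_single_index (by rw [mul_zero, Finsupp.single_zero]), mul_one]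

end Aux

/-- Leading monomials of normal `s`-polynomials: `⌊s̃x⌋₂` for `s ⊢ x` (when `|s̃| = 1`),
`⌊s̃a⌋₁` for `s ⊣ ⌊a⌋₁` (when `s` is strong); and for every normal `s`-polynomial `g`,
`ḡ ≥ s̄`, with equality if and only if `g = s`. -/
theorem lm_normal_poly {Y K : Type*} [Field K] (o : MonOrd Y) (s : Di Y K)
    (ms : DiWord Y) (hms : IsLM o s ms) (hmonic : s ms = 1) :
    (∀ x : Y, Multiset.card ms.word = 1 →
      IsLM o (pR s (mono (DiWord.mX x))) (DiWord.pv ms (DiWord.mX x))) ∧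
    (∀ (a : Multiset Y) (ha : a ≠ 0), IsStrong o s →
      IsLM o (pL s (mono (DiWord.m1 a ha))) (DiWord.pd ms (DiWord.m1 a ha))) ∧
    (∀ g : Di Y K, IsNormal o {s} g → ∀ mg, IsLM o g mg →
      o.dle ms mg ∧ (mg = ms ↔ g = s)) := by
  classical
  have part1 : ∀ x : Y, Multiset.card ms.word = 1 →
      IsLM o (pR s (mono (DiWord.mX x))) (DiWord.pv ms (DiWord.mX x)) := by
    intro x hcard
    rw [pR_mono']
    refine lm_map o s ms hms hmonic _ ?_ ?_
    · intro u hu hune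
      rcases hms.2 u hu hune with hlt | ⟨heq, _⟩
      · exact Or.inl (o.compat u.word ms.word (DiWord.mX x).word u.word_ne ms.word_ne hlt)
      · exfalso
        apply hune
        have hcu : Multiset.card u.word = 1 := by rw [heq]; exact hcard
        exact DiWord.ext' heq (by rw [DiWord.lbl_eq_one hcu, DiWord.lbl_eq_one hcard])
    · intro u hu he
      have hw : u.word + (DiWord.mX x).word = ms.word + (DiWord.mX x).word :=
        congrArg DiWord.word he
      have hw' : u.word = ms.word := add_right_cancel hw
      have hcu : Multiset.card u.word = 1 := by rw [hw']; exact hcard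
      exact DiWord.ext' hw' (by rw [DiWord.lbl_eq_one hcu, DiWord.lbl_eq_one hcard])
  have part2 : ∀ (a : Multiset Y) (ha : a ≠ 0), IsStrong o s →
      IsLM o (pL s (mono (DiWord.m1 a ha))) (DiWord.pd ms (DiWord.m1 a ha)) := by
    intro a ha hstrong
    obtain ⟨m, hm, hstr⟩ := hstrong
    have hmm : m = ms := IsLM.unique hm hms
    subst hmm
    rw [pL_mono']
    refine lm_map o s m hm hmonic _ ?_ ?_
    · intro u hu hune
      exact Or.inl (o.compat u.word m.word a u.word_ne m.word_ne (hstr u hu hune))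
    · intro u hu he
      by_contra hune
      have hw : u.word + a = m.word + a := congrArg DiWord.word he
      have hw' : u.word = m.word := add_right_cancel hw
      have hlt := hstr u hu hune
      rw [hw'] at hlt
      exact o.lt_irrefl' m.word_ne hlt
  refine ⟨part1, part2, ?_⟩
  intro g hg mg hmg
  rcases hg with hgS | ⟨s', hs', x, ⟨m, hm, hcard⟩, rfl⟩ | ⟨s', hs', a, ha, hstrong, rfl⟩
  · have hgs : g = s := hgS
    subst hgs
    have hmm : ms = mg := IsLM.unique hms hmg
    exact ⟨Or.inl hmm, iff_of_true hmm.symm rfl⟩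
  · have hss : s' = s := hs'
    subst hss
    have hmm : m = ms := IsLM.unique hm hms
    rw [hmm] at hcard
    have hlm := part1 x hcard
    have hmg' : mg = DiWord.pv ms (DiWord.mX x) := IsLM.unique hmg hlm
    have hlt : o.lt ms.word mg.word := by
      rw [hmg']
      exact o.lt_add' ms.word_ne (by simp : ({x} : Multiset Y) ≠ 0)
    refine ⟨Or.inr (Or.inl hlt), ?_⟩
    constructor
    · intro h
      rw [h] at hlt
      exact absurd hlt (o.lt_irrefl' ms.word_ne)
    · intro h
      exfalso
      rw [← h] at hms
      have hmm2 : mg = ms := IsLM.unique hmg hms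
      rw [hmm2] at hlt
      exact o.lt_irrefl' ms.word_ne hlt
  · have hss : s' = s := hs'
    subst hss
    have hlm := part2 a ha hstrong
    have hmg' : mg = DiWord.pd ms (DiWord.m1 a ha) := IsLM.unique hmg hlm
    have hlt : o.lt ms.word mg.word := by
      rw [hmg']
      exact o.lt_add' ms.word_ne ha
    refine ⟨Or.inr (Or.inl hlt), ?_⟩
    constructor
    · intro h
      rw [h] at hlt
      exact absurd hlt (o.lt_irrefl' ms.word_ne)
    · intro h
      exfalso
      rw [← h] at hms
      have hmm2 : mg = ms := IsLM.unique hmg hms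
      rw [hmm2] at hlt
      exact o.lt_irrefl' ms.word_ne hlt

end CDi
end
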